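/- Let A be an s×s matrix over the finite field F_q that is non-singular by columns (NSC), and let C_1,…,C_s be linear codes of length n over F_q. Then the Euclidean dual C^⊥ of the matrix-product code C = [C_1,…,C_s]A has minimum distance d(C^⊥) ≥ min{ s·d(C_s^⊥), (s−1)·d(C_{s−1}^⊥), …, 1·d(C_1^⊥) }. -/

import Mathlib

open Polynomial Matrix Finset

variable {F : Type*} [Field F]

/-- The minimum (Hamming) distance of a linear code `C ⊆ F^ι`:
the least Hamming weight of a nonzero codeword. -/
noncomputable def minDist {ι : Type*} [Fintype ι] [DecidableEq F]
    (C : Submodule F (ι → F)) : ℕ :=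
  sInf {d | ∃ x ∈ C, x ≠ 0 ∧ hammingNorm x = d}

/-- The Euclidean dual of a linear code. -/
def dualCode {ι : Type*} [Fintype ι] (C : Submodule F (ι → F)) :
    Submodule F (ι → F) where
  carrier := {a | ∀ b ∈ C, ∑ i, a i * b i = 0}
  add_mem' := by
    intro a b ha hb c hc
    simp only [Pi.add_apply, add_mul, Finset.sum_add_distrib,
      ha c hc, hb c hc, add_zero]
  zero_mem' := by
    intro b hb
    simp
  smul_mem' := by
    intro r a ha b hb
    simp only [Pi.smul_apply, smul_eq_mul, mul_assoc, ← Finset.mul_sum,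
      ha b hb, mul_zero]

/-- `C` is a linear complementary dual (LCD) code. -/
def IsLCD {ι : Type*} [Fintype ι] (C : Submodule F (ι → F)) : Prop :=
  C ⊓ dualCode C = ⊥

/-- The Hermitian dual (with respect to `⟨a,b⟩ = ∑ i, a i * (b i)^l`) of a linear code. -/
def hermitianDual (l : ℕ) {ι : Type*} [Fintype ι] (C : Submodule F (ι → F)) :
    Submodule F (ι → F) where
  carrier := {a | ∀ b ∈ C, ∑ i, a i * (b i) ^ l = 0}
  add_mem' := by
    intro a b ha hb c hc
    simp only [Pi.add_apply, add_mul, Finset.sum_add_distrib,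
      ha c hc, hb c hc, add_zero]
  zero_mem' := by
    intro b hb
    simp
  smul_mem' := by
    intro r a ha b hb
    simp only [Pi.smul_apply, smul_eq_mul, mul_assoc, ← Finset.mul_sum,
      ha b hb, mul_zero]

/-- `C` is a Hermitian linear complementary dual code. -/
def IsHermitianLCD (l : ℕ) {ι : Type*} [Fintype ι] (C : Submodule F (ι → F)) : Prop :=
  C ⊓ hermitianDual l C = ⊥

/-- The matrix-product code `[C_1, …, C_s]·A`: all concatenated vectors
`(∑ i a_{i1} c_i, …, ∑ i a_{im} c_i)` with `c_i ∈ C_i`; coordinates are indexed by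
`Fin m × Fin n` (block `j`, position `t` within block). -/
def matrixProductCode {s m n : ℕ} (A : Matrix (Fin s) (Fin m) F)
    (C : Fin s → Submodule F (Fin n → F)) :
    Submodule F (Fin m × Fin n → F) where
  carrier := {x | ∃ c : Fin s → (Fin n → F), (∀ i, c i ∈ C i) ∧
    x = fun p => ∑ i, A i p.1 * c i p.2}
  add_mem' := by
    rintro x y ⟨c, hc, rfl⟩ ⟨d, hd, rfl⟩
    refine ⟨fun i => c i + d i, fun i => (C i).add_mem (hc i) (hd i), ?_⟩
    funext p
    simp [mul_add, Finset.sum_add_distrib]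
  zero_mem' := ⟨0, fun i => (C i).zero_mem, by funext p; simp⟩
  smul_mem' := by
    rintro r x ⟨c, hc, rfl⟩
    refine ⟨fun i => r • c i, fun i => (C i).smul_mem r (hc i), ?_⟩
    funext p
    simp [Finset.mul_sum, mul_left_comm]

/-- A matrix is non-singular by columns (NSC) if, for every `t ≤ s` and every strictly
increasing choice of `t` columns, the `t × t` submatrix formed from the first `t` rows
and those columns is non-singular. -/
def NSC {s m : ℕ} (A : Matrix (Fin s) (Fin m) F) : Prop :=
  ∀ (t : ℕ) (ht : t ≤ s) (j : Fin t → Fin m), StrictMono j →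
    (Matrix.of fun a b : Fin t => A (Fin.castLE ht a) (j b)).det ≠ 0

/-- The cyclic code of length `n` with generator polynomial `g` (a divisor of `Xⁿ - 1`),
viewed in `F^n` via the coefficient identification: a word `c` lies in the code iff the
associated polynomial `∑ cᵢ Xⁱ` (of degree `< n`) is a multiple of `g`. -/
def cyclicCode (n : ℕ) (g : F[X]) : Submodule F (Fin n → F) where
  carrier := {c | g ∣ ∑ i : Fin n, Polynomial.C (c i) * Polynomial.X ^ (i : ℕ)}
  add_mem' := by
    intro a b ha hb
    have h : (∑ i : Fin n, Polynomial.C ((a + b) i) * Polynomial.X ^ (i : ℕ))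
        = (∑ i : Fin n, Polynomial.C (a i) * Polynomial.X ^ (i : ℕ))
          + (∑ i : Fin n, Polynomial.C (b i) * Polynomial.X ^ (i : ℕ)) := by
      simp [add_mul, Finset.sum_add_distrib]
    simp only [Set.mem_setOf_eq] at ha hb ⊢
    rw [h]
    exact dvd_add ha hb
  zero_mem' := by simp
  smul_mem' := by
    intro r a ha
    have h : (∑ i : Fin n, Polynomial.C ((r • a) i) * Polynomial.X ^ (i : ℕ))
        = Polynomial.C r * ∑ i : Fin n, Polynomial.C (a i) * Polynomial.X ^ (i : ℕ) := by
      simp [Finset.mul_sum, mul_assoc]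
    simp only [Set.mem_setOf_eq] at ha ⊢
    rw [h]
    exact ha.mul_left _

/-- The conjugate-reciprocal polynomial
`f^⊥(x) = a₀^{-l} (a_k^l + a_{k-1}^l x + ⋯ + a₀^l x^k)` of `f = a₀ + a₁ x + ⋯ + a_k x^k`. -/
noncomputable def conjReciprocal (l : ℕ) (f : F[X]) : F[X] :=
  Polynomial.C ((f.coeff 0 ^ l)⁻¹) *
    ∑ i ∈ Finset.range (f.natDegree + 1),
      Polynomial.C (f.coeff (f.natDegree - i) ^ l) * Polynomial.X ^ i

/-! Read a word `x` of length `m n` as the `m × n` matrix `X` whose rows are its blocks. Then `x`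
lies in the dual of `[C_1, …, C_s] A` iff row `i` of `A X` lies in `C_i^⊥` for every `i`. Take
such an `x ≠ 0` of minimum weight and let `i` be the first nonzero row of `A X` (one exists
since `A` is invertible). On the support of that row, each column of `X` is a nonzero vector
killed by the first `i` rows of `A`; as `A` is NSC, such a column has at least `i + 1` nonzero
entries. Hence `wt x ≥ (i + 1) wt ((A X)_i) ≥ (i + 1) d(C_i^⊥)`. -/

theorem NSC.isUnit_det {s : ℕ} {A : Matrix (Fin s) (Fin s) F} (hA : NSC A) : IsUnit A.det :=
  isUnit_iff_ne_zero.2 (hA s le_rfl id strictMono_id)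

theorem sum_mul_matrixProduct_eq_sum_rows {s m n : ℕ} (A : Matrix (Fin s) (Fin m) F)
    (x : Fin m × Fin n → F) (c : Fin s → Fin n → F) :
    ∑ p, x p * ∑ i, A i p.1 * c i p.2
      = ∑ i, ∑ t, (A * Matrix.of (Function.curry x)) i t * c i t := by
  simp only [Matrix.mul_apply, Matrix.of_apply, Function.curry_apply, Finset.mul_sum,
    Finset.sum_mul, Fintype.sum_prod_type]
  refine (Finset.sum_congr rfl fun j _ => Finset.sum_comm).trans (Finset.sum_comm.trans ?_)
  refine Finset.sum_congr rfl fun i _ => Finset.sum_comm.trans ?_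
  exact Finset.sum_congr rfl fun t _ => Finset.sum_congr rfl fun j _ => by ring

theorem mem_dualCode_matrixProductCode_iff {s m n : ℕ} (A : Matrix (Fin s) (Fin m) F)
    (C : Fin s → Submodule F (Fin n → F)) (x : Fin m × Fin n → F) :
    x ∈ dualCode (matrixProductCode A C) ↔
      ∀ i, (A * Matrix.of (Function.curry x)) i ∈ dualCode (C i) := by
  constructor
  · intro h i b hb
    have := h _ ⟨Pi.single i b, fun r => ?_, rfl⟩
    · rwa [sum_mul_matrixProduct_eq_sum_rows, Fintype.sum_eq_single i fun r hr => by
        simp [Pi.single_eq_of_ne hr], Pi.single_eq_same] at this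
    · by_cases hr : r = i
      · subst hr; simpa using hb
      · simp [hr]
  · rintro h _ ⟨c, hc, rfl⟩
    rw [sum_mul_matrixProduct_eq_sum_rows]
    exact Finset.sum_eq_zero fun i _ => h i (c i) (hc i)

theorem dualCode_eq_bot_of_dualCode_matrixProductCode_eq_bot {s n : ℕ}
    {A : Matrix (Fin s) (Fin s) F} (hA : IsUnit A.det) {C : Fin s → Submodule F (Fin n → F)}
    (h : dualCode (matrixProductCode A C) = ⊥) (i : Fin s) : dualCode (C i) = ⊥ := by
  refine (Submodule.eq_bot_iff _).2 fun a ha => ?_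
  set Y : Matrix (Fin s) (Fin n) F := Pi.single i a
  have hAY : A * (A⁻¹ * Y) = Y := Matrix.mul_nonsing_inv_cancel_left A Y hA
  have hmem : Function.uncurry (A⁻¹ * Y) ∈ dualCode (matrixProductCode A C) := by
    refine (mem_dualCode_matrixProductCode_iff A C _).2 fun r => ?_
    change (A * (A⁻¹ * Y)) r ∈ _
    rw [hAY]
    by_cases hr : r = i
    · subst hr; simpa [Y] using ha
    · simp [Y, hr]
  rw [h, Submodule.mem_bot] at hmem
  have hzero : A⁻¹ * Y = 0 := funext₂ fun j t => congrFun hmem (j, t)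
  calc a = Y i := by simp [Y]
    _ = 0 := by rw [← hAY, hzero, Matrix.mul_zero]; rfl

theorem eq_zero_of_mul_of_curry_eq_zero {s n : ℕ} {A : Matrix (Fin s) (Fin s) F}
    (hA : IsUnit A.det) {x : Fin s × Fin n → F} (h : A * Matrix.of (Function.curry x) = 0) :
    x = 0 := by
  have hX : Matrix.of (Function.curry x) = 0 := by
    rw [← Matrix.nonsing_inv_mul_cancel_left A (Matrix.of (Function.curry x)) hA, h,
      Matrix.mul_zero]
  exact funext fun p => congrFun₂ hX p.1 p.2

section Weights

variable [DecidableEq F]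

theorem minDist_le_hammingNorm {ι : Type*} [Fintype ι] {C : Submodule F (ι → F)} {x : ι → F}
    (hx : x ∈ C) (hx0 : x ≠ 0) : minDist C ≤ hammingNorm x :=
  Nat.sInf_le ⟨x, hx, hx0, rfl⟩

theorem exists_hammingNorm_eq_minDist {ι : Type*} [Fintype ι] {C : Submodule F (ι → F)}
    (hC : C ≠ ⊥) : ∃ x ∈ C, x ≠ 0 ∧ hammingNorm x = minDist C := by
  obtain ⟨x, hx, hx0⟩ := Submodule.exists_mem_ne_zero_of_ne_bot hC
  exact Nat.sInf_mem (s := {d | ∃ x ∈ C, x ≠ 0 ∧ hammingNorm x = d})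
    ⟨_, x, hx, hx0, rfl⟩

theorem minDist_eq_zero_iff {ι : Type*} [Fintype ι] {C : Submodule F (ι → F)} :
    minDist C = 0 ↔ C = ⊥ := by
  constructor
  · intro h
    by_contra hC
    obtain ⟨x, -, hx0, hx⟩ := exists_hammingNorm_eq_minDist hC
    exact hx0 (hammingNorm_eq_zero.1 (hx.trans h))
  · rintro rfl
    refine Nat.sInf_eq_zero.2 (Or.inr (Set.eq_empty_of_forall_notMem ?_))
    rintro d ⟨x, hx, hx0, -⟩
    exact hx0 ((Submodule.mem_bot F).1 hx)

theorem hammingNorm_eq_sum_hammingNorm_col {m n : ℕ} (x : Fin m × Fin n → F) :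
    hammingNorm x = ∑ t, hammingNorm fun j => x (j, t) := by
  simp only [hammingNorm, Finset.card_filter]
  exact Fintype.sum_prod_type_right _

/-- On the support `J` of `v`, the block of `A` formed by its first `#J ≤ k` rows and the columns
in `J` is invertible and kills `v|_J`. -/
theorem NSC.lt_hammingNorm {s m : ℕ} {A : Matrix (Fin s) (Fin m) F} (hA : NSC A) {k : ℕ}
    (hk : k ≤ s) {v : Fin m → F} (hv : v ≠ 0)
    (h : ∀ r : Fin s, (r : ℕ) < k → (A *ᵥ v) r = 0) :
    k < hammingNorm v := by
  by_contra! hle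
  set J := Finset.univ.filter (v · ≠ 0)
  have hJ : J.card ≤ s := hle.trans hk
  set j := J.orderEmbOfFin rfl
  have hsupp : ∀ c ∉ Set.range j, v c = 0 := by
    simp [j, Finset.range_orderEmbOfFin, J]
  have hblock : A.submatrix (Fin.castLE hJ) j *ᵥ (v ∘ j) = 0 := by
    ext a
    calc _ = (A *ᵥ v) (Fin.castLE hJ a) :=
          Fintype.sum_of_injective j j.injective _ _
            (fun c hc => by rw [hsupp c hc, mul_zero]) (fun _ => rfl)
      _ = 0 := h _ (a.isLt.trans_le hle)
  have hvj : v ∘ j = 0 := Matrix.eq_zero_of_mulVec_eq_zero (hA _ hJ j j.strictMono) hblock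
  refine hv (funext fun c => ?_)
  by_cases hc : c ∈ Set.range j
  · obtain ⟨b, rfl⟩ := hc
    exact congrFun hvj b
  · exact hsupp c hc

theorem NSC.mul_hammingNorm_le {s m n : ℕ} {A : Matrix (Fin s) (Fin m) F} (hA : NSC A)
    (x : Fin m × Fin n → F) (i : Fin s)
    (h : ∀ r < i, (A * Matrix.of (Function.curry x)) r = 0) :
    ((i : ℕ) + 1) * hammingNorm ((A * Matrix.of (Function.curry x)) i) ≤ hammingNorm x := by
  set Y := A * Matrix.of (Function.curry x)
  have hY : ∀ r t, Y r t = (A *ᵥ fun j => x (j, t)) r := fun _ _ => rfl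
  calc ((i : ℕ) + 1) * hammingNorm (Y i)
        = ∑ t ∈ Finset.univ.filter (Y i · ≠ 0), ((i : ℕ) + 1) := by
        rw [Finset.sum_const, smul_eq_mul, mul_comm, hammingNorm]
    _ ≤ ∑ t ∈ Finset.univ.filter (Y i · ≠ 0), hammingNorm fun j => x (j, t) := by
        refine Finset.sum_le_sum fun t ht => hA.lt_hammingNorm i.isLt.le ?_ ?_
        · rintro hcol
          rw [Finset.mem_filter, hY, hcol, Matrix.mulVec_zero] at ht
          exact ht.2 rfl
        · exact fun r hr => (hY r t).symm.trans (congrFun (h r hr) t)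
    _ ≤ ∑ t, hammingNorm fun j => x (j, t) :=
        Finset.sum_le_sum_of_subset (Finset.subset_univ _)
    _ = hammingNorm x := (hammingNorm_eq_sum_hammingNorm_col x).symm

end Weights

theorem stmt4_general {F : Type*} [Field F] [DecidableEq F]
    {s n : ℕ} (A : Matrix (Fin s) (Fin s) F) (hNSC : NSC A)
    (C : Fin s → Submodule F (Fin n → F)) :
    sInf {v | ∃ i : Fin s, v = ((i : ℕ) + 1) * minDist (dualCode (C i))}
      ≤ minDist (dualCode (matrixProductCode A C)) := by
  have hA := hNSC.isUnit_det
  have hle : ∀ i : Fin s, sInf {v | ∃ i : Fin s, v = ((i : ℕ) + 1) * minDist (dualCode (C i))}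
      ≤ ((i : ℕ) + 1) * minDist (dualCode (C i)) := fun i => Nat.sInf_le ⟨i, rfl⟩
  by_cases hbot : dualCode (matrixProductCode A C) = ⊥
  · rcases isEmpty_or_nonempty (Fin s) with hs | ⟨⟨i⟩⟩
    · simp
    · have hi : minDist (dualCode (C i)) = 0 :=
        minDist_eq_zero_iff.2 (dualCode_eq_bot_of_dualCode_matrixProductCode_eq_bot hA hbot i)
      exact (hle i).trans (by rw [hi, mul_zero]; exact Nat.zero_le _)
  obtain ⟨x, hx, hx0, hxd⟩ := exists_hammingNorm_eq_minDist hbot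
  set Y := A * Matrix.of (Function.curry x)
  have hY : Y ≠ 0 := fun h => hx0 (eq_zero_of_mul_of_curry_eq_zero hA h)
  obtain ⟨i, hi, hmin⟩ := wellFounded_lt.has_min {i | Y i ≠ 0} (Function.ne_iff.1 hY)
  have hbelow : ∀ r < i, Y r = 0 := fun r hr => not_not.1 fun h => hmin r h hr
  have hYi : Y i ∈ dualCode (C i) := (mem_dualCode_matrixProductCode_iff A C x).1 hx i
  calc _ ≤ ((i : ℕ) + 1) * minDist (dualCode (C i)) := hle i
    _ ≤ ((i : ℕ) + 1) * hammingNorm (Y i) :=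
        Nat.mul_le_mul_left _ (minDist_le_hammingNorm hYi hi)
    _ ≤ hammingNorm x := hNSC.mul_hammingNorm_le x i hbelow
    _ = _ := hxd

theorem stmt4 {F : Type*} [Field F] [Fintype F] [DecidableEq F]
    {s n : ℕ} (A : Matrix (Fin s) (Fin s) F) (hNSC : NSC A)
    (C : Fin s → Submodule F (Fin n → F)) :
    sInf {v | ∃ i : Fin s, v = ((i : ℕ) + 1) * minDist (dualCode (C i))}
      ≤ minDist (dualCode (matrixProductCode A C)) :=
  stmt4_general A hNSC C
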